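/- Fix an integer q ≥ 1, let w be an integer with 1 ≤ w ≤ min(q, n), and let k₁,…,kₙ ∈ ℕ with k₁,…,k_w ≥ 1 and k_{w+1} = ⋯ = kₙ = 0. Assume f₁(x) = ∑_{m≥0} b_m x^m converges on [−1,1] with c₂ r^m ≤ b_m ≤ c₁ r^m for all m ≥ 0, where 0 < r < 1 and 0 < c₂ ≤ c₁. Set v := k₁ + ⋯ + k_w and μ_{(k),q} := ∑_{α₁+⋯+αₙ=q} (q!/(α₁!⋯αₙ!)) ∏_{i=1}^n λ_{k_i,α_i}. Then there exist constants C_{1,q}, C_{2,q} > 0, depending only on q, n, d, r, c₁, c₂, such that C_{2,q} (r/4)^v ≤ μ_{(k),q} ≤ C_{1,q} qⁿ q! v^q r^v. -/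

import Mathlib

open scoped BigOperators

/-- `powCoef b α m` is the `m`-th Taylor coefficient at `0` of `f₁^α`, where
`f₁(x) = ∑_{m≥0} b m * x^m` (α-fold Cauchy product). -/
def powCoef (b : ℕ → ℝ) (α m : ℕ) : ℝ :=
  ∑ t ∈ Finset.Nat.antidiagonalTuple α m, ∏ i, b (t i)

/-- The surface area of the unit sphere `S^{d-1} ⊆ ℝ^d`, i.e. `2 π^{d/2} / Γ(d/2)`. -/
noncomputable def unitSphereArea (d : ℕ) : ℝ :=
  2 * Real.pi ^ ((d : ℝ) / 2) / Real.Gamma ((d : ℝ) / 2)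

/-- The eigenvalue `λ_{k,α}` associated with the dot-product kernel `f₁^α` on `S^{d-1}`. -/
noncomputable def lamCoef (d : ℕ) (b : ℕ → ℝ) (k α : ℕ) : ℝ :=
  unitSphereArea (d - 1) * Real.Gamma (((d : ℝ) - 1) / 2) / 2 ^ (k + 1) *
    ∑' s : ℕ, powCoef b α (2 * s + k) *
      (((2 * s + k).factorial : ℝ) / ((2 * s).factorial : ℝ)) *
      (Real.Gamma ((s : ℝ) + 1 / 2) / Real.Gamma ((s : ℝ) + (k : ℝ) + (d : ℝ) / 2))

/-- `μ_{(k),q} := ∑_{α₁+⋯+αₙ=q} (q!/(α₁!⋯αₙ!)) ∏_{i=1}^n λ_{k_i,α_i}`. -/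
noncomputable def muQ (d n : ℕ) (b : ℕ → ℝ) (q : ℕ) (k : Fin n → ℕ) : ℝ :=
  ∑ t ∈ Finset.Nat.antidiagonalTuple n q,
    (Nat.multinomial Finset.univ t : ℝ) * ∏ i, lamCoef d b (k i) (t i)


/-!
The geometric bounds on `b` give `c₂^α r^m ≤ b_{m,α} ≤ (m+1)^α c₁^α r^m`. In the `s`-th term of
`λ_{k,α}` the Gamma/factorial weight is at most `2^k √π / Γ(d/2)`, because
`(2s+k)!/(2s)! ≤ 2^k (s+k)!/s!`, and at `s = 0` it is at least `√π / (2^(k+d) d!)`. Since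
`∑_s (s+1)^q r^(2s) < ∞`, this yields `c₂^α (r/4)^k ≲ λ_{k,α} ≲ c₁^α (k+1)^α r^k`.
For `μ`, the upper bound sums at most `(q+1)^n` terms with multinomial coefficients `≤ q!` and
uses `k_i + 1 ≤ 2v`; the lower bound keeps the single term of a composition `α` of `q` with
`α_i ≥ 1` for all `i < w` (possible as `w ≤ q`), so that `α_i = 0` only where `k_i = 0`.
-/

open Finset Real Nat

lemma card_antidiagonalTuple_le (α m : ℕ) :
    #(Finset.Nat.antidiagonalTuple α m) ≤ (m + 1) ^ α := by
  calc #(Finset.Nat.antidiagonalTuple α m)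
      ≤ #(Fintype.piFinset fun _ : Fin α => range (m + 1)) := by
        refine card_le_card fun t ht => Fintype.mem_piFinset.2 fun i => mem_range.2 ?_
        rw [Finset.Nat.mem_antidiagonalTuple] at ht
        exact Nat.lt_succ_of_le (ht ▸ single_le_sum (fun j _ => Nat.zero_le (t j)) (mem_univ i))
    _ = (m + 1) ^ α := by simp

lemma exists_sum_eq_and_ne_zero_of_lt {n w q : ℕ} (hw : 1 ≤ w) (hwq : w ≤ q) (hwn : w ≤ n) :
    ∃ t : Fin n → ℕ, ∑ i, t i = q ∧ ∀ i : Fin n, (i : ℕ) < w → t i ≠ 0 := by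
  refine ⟨fun i => (if (i : ℕ) < w then 1 else 0) +
    (Pi.single (⟨0, by omega⟩ : Fin n) (q - w) : Fin n → ℕ) i, ?_, fun i hi => by simp [hi]⟩
  rw [sum_add_distrib, sum_boole, Fin.card_filter_val_lt]
  simp only [cast_min, cast_id, sum_pi_single', mem_univ, ↓reduceIte]
  omega

section powCoef

variable {b : ℕ → ℝ} {c r : ℝ}

lemma powCoef_nonneg (hb : ∀ m, 0 ≤ b m) (α m : ℕ) : 0 ≤ powCoef b α m :=
  sum_nonneg fun t _ => prod_nonneg fun i _ => hb (t i)

lemma prod_mul_pow_of_mem_antidiagonalTuple {α m : ℕ} {t : Fin α → ℕ}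
    (ht : t ∈ Finset.Nat.antidiagonalTuple α m) : ∏ i, c * r ^ t i = c ^ α * r ^ m := by
  rw [Finset.Nat.mem_antidiagonalTuple] at ht
  simp [prod_mul_distrib, prod_pow_eq_pow_sum, ht]

lemma powCoef_le (hb0 : ∀ m, 0 ≤ b m) (hb : ∀ m, b m ≤ c * r ^ m) (hr : 0 ≤ r) (α m : ℕ) :
    powCoef b α m ≤ ((m : ℝ) + 1) ^ α * c ^ α * r ^ m := by
  have hc : 0 ≤ c := by simpa using (hb0 0).trans (hb 0)
  calc powCoef b α m ≤ #(Finset.Nat.antidiagonalTuple α m) • (c ^ α * r ^ m) :=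
        sum_le_card_nsmul _ _ _ fun t ht =>
          (prod_le_prod (fun i _ => hb0 _) fun i _ => hb _).trans_eq
            (prod_mul_pow_of_mem_antidiagonalTuple ht)
    _ ≤ ((m : ℝ) + 1) ^ α * (c ^ α * r ^ m) := by
        rw [nsmul_eq_mul]
        gcongr
        exact_mod_cast card_antidiagonalTuple_le α m
    _ = ((m : ℝ) + 1) ^ α * c ^ α * r ^ m := by ring

lemma le_powCoef (hc : 0 ≤ c) (hr : 0 ≤ r) (hb : ∀ m, c * r ^ m ≤ b m) {α m : ℕ}
    (h : α ≠ 0 ∨ m = 0) : c ^ α * r ^ m ≤ powCoef b α m := by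
  obtain ⟨t, ht⟩ : (Finset.Nat.antidiagonalTuple α m).Nonempty := by
    rcases h with h | rfl
    · obtain ⟨α, rfl⟩ := Nat.exists_eq_succ_of_ne_zero h
      exact ⟨Pi.single 0 m, by simp [Finset.Nat.mem_antidiagonalTuple]⟩
    · exact ⟨0, by simp [Finset.Nat.mem_antidiagonalTuple]⟩
  have hb0 : ∀ m, 0 ≤ b m := fun m => (by positivity : 0 ≤ c * r ^ m).trans (hb m)
  calc c ^ α * r ^ m = ∏ i, c * r ^ t i := (prod_mul_pow_of_mem_antidiagonalTuple ht).symm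
    _ ≤ ∏ i, b (t i) := prod_le_prod (fun i _ => by positivity) fun i _ => hb _
    _ ≤ powCoef b α m :=
        single_le_sum (f := fun t => ∏ i, b (t i)) (fun t _ => prod_nonneg fun i _ => hb0 _) ht

end powCoef

lemma Nat.two_mul_add_factorial_mul_le (s k : ℕ) :
    (2 * s + k)! * s ! ≤ 2 ^ k * ((2 * s)! * (s + k)!) := by
  induction k with
  | zero => simp
  | succ k ih =>
    rw [← add_assoc, ← add_assoc, factorial_succ, factorial_succ, pow_succ]
    calc (2 * s + k + 1) * (2 * s + k)! * s !
        ≤ (2 * s + k + 1) * (2 ^ k * ((2 * s)! * (s + k)!)) := by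
          rw [mul_assoc]; gcongr
      _ ≤ 2 * (s + k + 1) * (2 ^ k * ((2 * s)! * (s + k)!)) := by gcongr; omega
      _ = 2 ^ k * 2 * ((2 * s)! * ((s + k + 1) * (s + k)!)) := by ring

lemma Nat.add_factorial_le (k d : ℕ) : (k + d)! ≤ 2 ^ (k + d) * (k ! * d !) := by
  rw [← Nat.add_choose_mul_factorial_mul_factorial k d, mul_assoc]
  exact Nat.mul_le_mul_right _ (Nat.choose_le_two_pow _ _)

lemma Real.Gamma_nat_add_half_le (s : ℕ) : Gamma (s + 1 / 2) ≤ √π * s ! := by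
  induction s with
  | zero => simp [-one_div, Gamma_one_half_eq]
  | succ s ih =>
    rw [Nat.cast_succ, add_right_comm, Gamma_add_one (by positivity), factorial_succ]
    calc ((s : ℝ) + 1 / 2) * Gamma (s + 1 / 2) ≤ ((s : ℝ) + 1) * (√π * s !) := by
          gcongr; linarith
      _ = √π * ((s + 1) * s ! : ℕ) := by push_cast; ring

lemma Real.Gamma_mul_factorial_le {a : ℝ} (ha : 1 ≤ a) (t : ℕ) : Gamma a * t ! ≤ Gamma (t + a) := by
  induction t with
  | zero => simp
  | succ t ih =>
    rw [Nat.cast_succ, add_right_comm, Gamma_add_one (by positivity), factorial_succ]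
    calc Gamma a * ((t + 1) * t ! : ℕ) = ((t : ℝ) + 1) * (Gamma a * t !) := by push_cast; ring
      _ ≤ ((t : ℝ) + a) * Gamma (t + a) := by gcongr

lemma Real.Gamma_le_factorial {x : ℝ} {N : ℕ} (hx : 1 ≤ x) (hxN : x ≤ N) : Gamma x ≤ N ! := by
  calc Gamma x ≤ x * Gamma x := le_mul_of_one_le_left (by positivity) hx
    _ = Gamma (x + 1) := (Gamma_add_one (by positivity)).symm
    _ ≤ Gamma (N + 1) :=
        Gamma_strictMonoOn_Ici.monotoneOn (Set.mem_Ici.2 (by linarith))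
          (Set.mem_Ici.2 (by linarith)) (by linarith)
    _ = N ! := Gamma_nat_eq_factorial N

lemma factorial_ratio_mul_Gamma_ratio_le {a : ℝ} (ha : 1 ≤ a) (s k : ℕ) :
    ((2 * s + k)! / (2 * s)! : ℝ) * (Gamma (s + 1 / 2) / Gamma (s + k + a)) ≤
      √π / Gamma a * 2 ^ k := by
  have hfact : ((2 * s + k)! * s ! : ℝ) ≤ 2 ^ k * ((2 * s)! * (s + k)!) := by
    exact_mod_cast Nat.two_mul_add_factorial_mul_le s k
  have hden : Gamma a * (s + k)! ≤ Gamma (s + k + a) := by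
    simpa using Gamma_mul_factorial_le ha (s + k)
  calc ((2 * s + k)! / (2 * s)! : ℝ) * (Gamma (s + 1 / 2) / Gamma (s + k + a))
      ≤ ((2 * s + k)! / (2 * s)! : ℝ) * (√π * s ! / (Gamma a * (s + k)!)) := by
        gcongr
        exact Gamma_nat_add_half_le s
    _ = √π / Gamma a * ((2 * s + k)! * s ! / ((2 * s)! * (s + k)!)) := by
        field_simp
    _ ≤ √π / Gamma a * 2 ^ k := by
        gcongr
        rwa [div_le_iff₀ (by positivity)]

lemma summable_succ_pow_mul_geometric {x : ℝ} (hx0 : 0 ≤ x) (hx1 : x < 1) (N : ℕ) :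
    Summable fun s : ℕ => ((s : ℝ) + 1) ^ N * x ^ s := by
  refine (summable_descFactorial_mul_geometric_of_norm_lt_one N
    (by rwa [norm_of_nonneg hx0])).of_nonneg_of_le (fun s => by positivity) fun s => ?_
  gcongr
  have := Nat.pow_sub_le_descFactorial (s + N) N
  rw [show s + N + 1 - N = s + 1 by omega] at this
  exact_mod_cast this

lemma unitSphereArea_pos {d : ℕ} (hd : 0 < d) : 0 < unitSphereArea d := by
  unfold unitSphereArea
  positivity

noncomputable def lamTerm (d : ℕ) (b : ℕ → ℝ) (k α s : ℕ) : ℝ :=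
  powCoef b α (2 * s + k) * (((2 * s + k).factorial : ℝ) / ((2 * s).factorial : ℝ)) *
    (Real.Gamma ((s : ℝ) + 1 / 2) / Real.Gamma ((s : ℝ) + (k : ℝ) + (d : ℝ) / 2))

section lamCoef

variable {d : ℕ} {b : ℕ → ℝ} {c r : ℝ}

lemma lamCoef_eq (k α : ℕ) :
    lamCoef d b k α = unitSphereArea (d - 1) * Gamma (((d : ℝ) - 1) / 2) / 2 ^ (k + 1) *
      ∑' s, lamTerm d b k α s := rfl

lemma unitSphereArea_mul_Gamma_pos (hd : 2 ≤ d) :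
    0 < unitSphereArea (d - 1) * Gamma (((d : ℝ) - 1) / 2) := by
  have : (2 : ℝ) ≤ d := by exact_mod_cast hd
  have : 0 < unitSphereArea (d - 1) := unitSphereArea_pos (by omega)
  have : 0 < Gamma (((d : ℝ) - 1) / 2) := Gamma_pos_of_pos (by linarith)
  positivity

lemma lamTerm_nonneg (hd : 0 < d) (hb : ∀ m, 0 ≤ b m) (k α s : ℕ) : 0 ≤ lamTerm d b k α s := by
  have := powCoef_nonneg hb α (2 * s + k)
  unfold lamTerm
  positivity

lemma lamTerm_le (hd : 2 ≤ d) (hr : 0 ≤ r) (hb0 : ∀ m, 0 ≤ b m) (hb : ∀ m, b m ≤ c * r ^ m)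
    {α Q : ℕ} (hαQ : α ≤ Q) (k s : ℕ) :
    lamTerm d b k α s ≤
      2 ^ Q * √π / Gamma (d / 2) * (c ^ α * ((k : ℝ) + 1) ^ α * (2 * r) ^ k) *
        (((s : ℝ) + 1) ^ Q * (r ^ 2) ^ s) := by
  have hc : 0 ≤ c := by simpa using (hb0 0).trans (hb 0)
  have hd' : (1 : ℝ) ≤ d / 2 := by rw [le_div_iff₀ two_pos]; exact_mod_cast hd
  have hpow : ((2 * s + k : ℕ) + 1 : ℝ) ^ α ≤ ((k : ℝ) + 1) ^ α * (2 ^ Q * ((s : ℝ) + 1) ^ Q) := by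
    calc ((2 * s + k : ℕ) + 1 : ℝ) ^ α ≤ (((k : ℝ) + 1) * (2 * ((s : ℝ) + 1))) ^ α := by
          gcongr
          push_cast
          nlinarith [(s.cast_nonneg : (0 : ℝ) ≤ s), (k.cast_nonneg : (0 : ℝ) ≤ k)]
      _ ≤ ((k : ℝ) + 1) ^ α * (2 * ((s : ℝ) + 1)) ^ Q := by
          rw [mul_pow]
          gcongr
          linarith [(s.cast_nonneg : (0 : ℝ) ≤ s)]
      _ = ((k : ℝ) + 1) ^ α * (2 ^ Q * ((s : ℝ) + 1) ^ Q) := by rw [mul_pow]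
  calc lamTerm d b k α s
      = powCoef b α (2 * s + k) * (((2 * s + k)! / (2 * s)! : ℝ) *
          (Gamma (s + 1 / 2) / Gamma (s + k + d / 2))) := by
        rw [lamTerm, mul_assoc]
    _ ≤ ((2 * s + k : ℕ) + 1 : ℝ) ^ α * c ^ α * r ^ (2 * s + k) * (√π / Gamma (d / 2) * 2 ^ k) :=
        mul_le_mul (powCoef_le hb0 hb hr α (2 * s + k))
          (factorial_ratio_mul_Gamma_ratio_le hd' s k) (by positivity) (by positivity)
    _ ≤ ((k : ℝ) + 1) ^ α * (2 ^ Q * ((s : ℝ) + 1) ^ Q) * c ^ α * r ^ (2 * s + k) *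
          (√π / Gamma (d / 2) * 2 ^ k) := by gcongr
    _ = _ := by rw [pow_add, pow_mul, mul_pow]; ring

lemma summable_lamTerm (hd : 2 ≤ d) (hr0 : 0 ≤ r) (hr1 : r < 1) (hb0 : ∀ m, 0 ≤ b m)
    (hb : ∀ m, b m ≤ c * r ^ m) (k α : ℕ) : Summable (lamTerm d b k α) :=
  (summable_succ_pow_mul_geometric (by positivity) (by nlinarith) α |>.mul_left _).of_nonneg_of_le
    (lamTerm_nonneg (by omega) hb0 k α) (lamTerm_le hd hr0 hb0 hb le_rfl k)

lemma lamCoef_nonneg (hd : 2 ≤ d) (hb : ∀ m, 0 ≤ b m) (k α : ℕ) : 0 ≤ lamCoef d b k α := by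
  have := unitSphereArea_mul_Gamma_pos hd
  have : 0 ≤ ∑' s, lamTerm d b k α s := tsum_nonneg (lamTerm_nonneg (by omega) hb k α)
  rw [lamCoef_eq]
  positivity

lemma exists_lamCoef_le (hd : 2 ≤ d) (hr0 : 0 ≤ r) (hr1 : r < 1) (Q : ℕ) :
    ∃ K > 0, ∀ (b : ℕ → ℝ) (c : ℝ), (∀ m, 0 ≤ b m) → (∀ m, b m ≤ c * r ^ m) →
      ∀ k α, α ≤ Q → lamCoef d b k α ≤ K * (c ^ α * ((k : ℝ) + 1) ^ α * r ^ k) := by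
  have hA := unitSphereArea_mul_Gamma_pos hd
  have hM := summable_succ_pow_mul_geometric (x := r ^ 2) (by positivity) (by nlinarith) Q
  set M := ∑' s : ℕ, ((s : ℝ) + 1) ^ Q * (r ^ 2) ^ s
  have hM0 : 0 < M := hM.tsum_pos (fun s => by positivity) 0 (by simp)
  set C := 2 ^ Q * √π / Gamma (d / 2)
  refine ⟨unitSphereArea (d - 1) * Gamma (((d : ℝ) - 1) / 2) / 2 * C * M, by positivity, ?_⟩
  intro b c hb0 hb k α hαQ
  have hc : 0 ≤ c := by simpa using (hb0 0).trans (hb 0)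
  have hsum : ∑' s, lamTerm d b k α s ≤ C * (c ^ α * ((k : ℝ) + 1) ^ α * (2 * r) ^ k) * M := by
    rw [← tsum_mul_left]
    exact (summable_lamTerm hd hr0 hr1 hb0 hb k α).tsum_le_tsum (lamTerm_le hd hr0 hb0 hb hαQ k)
      (hM.mul_left _)
  rw [lamCoef_eq]
  calc _ ≤ unitSphereArea (d - 1) * Gamma (((d : ℝ) - 1) / 2) / 2 ^ (k + 1) *
        (C * (c ^ α * ((k : ℝ) + 1) ^ α * (2 * r) ^ k) * M) := by gcongr
    _ = _ := by rw [mul_pow, pow_succ]; field_simp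

lemma le_lamTerm_zero (hd : 2 ≤ d) (hc : 0 ≤ c) (hr : 0 ≤ r) (hb : ∀ m, c * r ^ m ≤ b m)
    {k α : ℕ} (h : α ≠ 0 ∨ k = 0) :
    c ^ α * r ^ k * √π / (2 ^ (k + d) * d !) ≤ lamTerm d b k α 0 := by
  have hΓ : Gamma (k + d / 2) ≤ 2 ^ (k + d) * (k ! * d !) := by
    have h2 : (2 : ℝ) ≤ d := by exact_mod_cast hd
    calc Gamma (k + d / 2) ≤ (k + d)! :=
          Gamma_le_factorial (by linarith [(k.cast_nonneg : (0 : ℝ) ≤ k)]) (by push_cast; linarith)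
      _ ≤ _ := by exact_mod_cast Nat.add_factorial_le k d
  have hpow := le_powCoef hc hr hb h
  have hb0 : ∀ m, 0 ≤ b m := fun m => (by positivity : 0 ≤ c * r ^ m).trans (hb m)
  have := powCoef_nonneg hb0 α k
  calc c ^ α * r ^ k * √π / (2 ^ (k + d) * d !)
      = c ^ α * r ^ k * k ! * (√π / (2 ^ (k + d) * (k ! * d !))) := by field_simp
    _ ≤ powCoef b α k * k ! * (√π / Gamma (k + d / 2)) := by gcongr
    _ = lamTerm d b k α 0 := by simp [lamTerm, -one_div, Gamma_one_half_eq]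

lemma exists_le_lamCoef (hd : 2 ≤ d) :
    ∃ B > 0, ∀ (b : ℕ → ℝ) (c r : ℝ) (k α : ℕ), 0 ≤ c → 0 ≤ r → (∀ m, c * r ^ m ≤ b m) →
      Summable (lamTerm d b k α) → (α ≠ 0 ∨ k = 0) →
        B * (c ^ α * (r / 4) ^ k) ≤ lamCoef d b k α := by
  have hA := unitSphereArea_mul_Gamma_pos hd
  refine ⟨unitSphereArea (d - 1) * Gamma (((d : ℝ) - 1) / 2) * √π / (2 ^ (d + 1) * d !),
    by positivity, ?_⟩
  intro b c r k α hc hr hb hsum h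
  have hb0 : ∀ m, 0 ≤ b m := fun m => (by positivity : 0 ≤ c * r ^ m).trans (hb m)
  rw [lamCoef_eq]
  calc _ = unitSphereArea (d - 1) * Gamma (((d : ℝ) - 1) / 2) / 2 ^ (k + 1) *
        (c ^ α * r ^ k * √π / (2 ^ (k + d) * d !)) := by
        rw [div_pow, show (4 : ℝ) = 2 ^ 2 by norm_num, ← pow_mul]; field_simp; ring
    _ ≤ _ := by
        gcongr
        exact (le_lamTerm_zero hd hc hr hb h).trans
          (hsum.le_tsum 0 fun s _ => lamTerm_nonneg (by omega) hb0 k α s)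

end lamCoef

section muQ

variable {d n q : ℕ} {b : ℕ → ℝ}

lemma prod_lamCoef_le_muQ (hlam : ∀ k α, 0 ≤ lamCoef d b k α) (k : Fin n → ℕ) {t : Fin n → ℕ}
    (ht : ∑ i, t i = q) : ∏ i, lamCoef d b (k i) (t i) ≤ muQ d n b q k := by
  have hprod : ∀ t : Fin n → ℕ, 0 ≤ ∏ i, lamCoef d b (k i) (t i) :=
    fun t => prod_nonneg fun i _ => hlam _ _
  calc ∏ i, lamCoef d b (k i) (t i)
      ≤ (Nat.multinomial univ t : ℝ) * ∏ i, lamCoef d b (k i) (t i) :=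
        le_mul_of_one_le_left (hprod t) (by exact_mod_cast Nat.multinomial_pos _ _)
    _ ≤ muQ d n b q k :=
        single_le_sum (f := fun t => (Nat.multinomial univ t : ℝ) * ∏ i, lamCoef d b (k i) (t i))
          (fun t _ => mul_nonneg (Nat.cast_nonneg _) (hprod t))
          (Finset.Nat.mem_antidiagonalTuple.2 ht)

lemma le_muQ {B c x : ℝ} (hB : 0 ≤ B) (hc : 0 ≤ c) (hx : 0 ≤ x)
    (hlam0 : ∀ k α, 0 ≤ lamCoef d b k α)
    (hlam : ∀ k α, (α ≠ 0 ∨ k = 0) → B * (c ^ α * x ^ k) ≤ lamCoef d b k α)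
    {w : ℕ} (hw : 1 ≤ w) (hwq : w ≤ q) (hwn : w ≤ n) (k : Fin n → ℕ)
    (hk : ∀ i : Fin n, w ≤ (i : ℕ) → k i = 0) :
    B ^ n * c ^ q * x ^ (∑ i, k i) ≤ muQ d n b q k := by
  obtain ⟨t, ht, htw⟩ := exists_sum_eq_and_ne_zero_of_lt hw hwq hwn
  calc B ^ n * c ^ q * x ^ (∑ i, k i) = ∏ i, B * (c ^ t i * x ^ k i) := by
        simp [prod_mul_distrib, prod_pow_eq_pow_sum, ht, mul_assoc]
    _ ≤ ∏ i, lamCoef d b (k i) (t i) := by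
        refine prod_le_prod (fun i _ => by positivity) fun i _ => hlam _ _ ?_
        by_cases hi : (i : ℕ) < w
        · exact Or.inl (htw i hi)
        · exact Or.inr (hk i (not_lt.1 hi))
    _ ≤ muQ d n b q k := prod_lamCoef_le_muQ hlam0 k ht

lemma muQ_le {K c r : ℝ} (hK : 0 ≤ K) (hc : 0 ≤ c) (hr : 0 ≤ r)
    (hlam0 : ∀ k α, 0 ≤ lamCoef d b k α)
    (hlam : ∀ k α, α ≤ q → lamCoef d b k α ≤ K * (c ^ α * ((k : ℝ) + 1) ^ α * r ^ k))
    (k : Fin n → ℕ) :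
    muQ d n b q k ≤
      ((q : ℝ) + 1) ^ n * q ! * K ^ n * c ^ q * ((∑ i, k i : ℕ) + 1 : ℝ) ^ q * r ^ (∑ i, k i) := by
  set v := ∑ i, k i
  have hterm : ∀ t ∈ Finset.Nat.antidiagonalTuple n q,
      (Nat.multinomial univ t : ℝ) * ∏ i, lamCoef d b (k i) (t i) ≤
        q ! * (K ^ n * c ^ q * ((v : ℝ) + 1) ^ q * r ^ v) := by
    intro t ht
    rw [Finset.Nat.mem_antidiagonalTuple] at ht
    have hmult : Nat.multinomial univ t ≤ q ! :=
      ht ▸ Nat.le_of_dvd (factorial_pos _) (Dvd.intro_left _ (Nat.multinomial_spec _ _))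
    have hprod : ∏ i, lamCoef d b (k i) (t i) ≤ K ^ n * c ^ q * ((v : ℝ) + 1) ^ q * r ^ v :=
      calc ∏ i, lamCoef d b (k i) (t i)
          ≤ ∏ i, K * (c ^ t i * ((v : ℝ) + 1) ^ t i * r ^ k i) := by
            refine prod_le_prod (fun i _ => hlam0 _ _) fun i _ =>
              (hlam _ _ (ht ▸ single_le_sum (fun j _ => Nat.zero_le (t j)) (mem_univ i))).trans ?_
            gcongr
            exact_mod_cast single_le_sum (fun j _ => Nat.zero_le (k j)) (mem_univ i)
        _ = K ^ n * c ^ q * ((v : ℝ) + 1) ^ q * r ^ v := by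
            simp [prod_mul_distrib, prod_pow_eq_pow_sum, ht, v, mul_assoc]
    have := prod_nonneg fun i (_ : i ∈ univ) => hlam0 (k i) (t i)
    gcongr
  calc muQ d n b q k
      ≤ #(Finset.Nat.antidiagonalTuple n q) • (q ! * (K ^ n * c ^ q * ((v : ℝ) + 1) ^ q * r ^ v)) :=
        sum_le_card_nsmul _ _ _ hterm
    _ ≤ ((q : ℝ) + 1) ^ n * (q ! * (K ^ n * c ^ q * ((v : ℝ) + 1) ^ q * r ^ v)) := by
        rw [nsmul_eq_mul]
        gcongr
        exact_mod_cast card_antidiagonalTuple_le n q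
    _ = _ := by ring

end muQ

theorem stmt_6_general (d n : ℕ) (hd : 2 ≤ d) (q : ℕ) (hq : 1 ≤ q)
    (r c₁ c₂ : ℝ) (hr0 : 0 < r) (hr1 : r < 1) (hc2 : 0 < c₂) (hcc : c₂ ≤ c₁) :
    ∃ C₁ C₂ : ℝ, 0 < C₁ ∧ 0 < C₂ ∧
      ∀ b : ℕ → ℝ,
        (∀ x ∈ Set.Icc (-1 : ℝ) 1, Summable fun m : ℕ => b m * x ^ m) →
        (∀ m : ℕ, c₂ * r ^ m ≤ b m ∧ b m ≤ c₁ * r ^ m) →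
        ∀ w : ℕ, 1 ≤ w → w ≤ min q n →
          ∀ k : Fin n → ℕ,
            (∀ i : Fin n, (i : ℕ) < w → 1 ≤ k i) →
            (∀ i : Fin n, w ≤ (i : ℕ) → k i = 0) →
            C₂ * (r / 4) ^ (∑ i, k i) ≤ muQ d n b q k ∧
            muQ d n b q k ≤
              C₁ * (q : ℝ) ^ n * (q.factorial : ℝ) * ((∑ i, k i : ℕ) : ℝ) ^ q *
                r ^ (∑ i, k i) := by
  have hc1 : 0 < c₁ := hc2.trans_le hcc
  obtain ⟨K, hK, hlam_le⟩ := exists_lamCoef_le hd hr0.le hr1 q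
  obtain ⟨B, hB, hle_lam⟩ := exists_le_lamCoef hd
  refine ⟨2 ^ n * K ^ n * c₁ ^ q * 2 ^ q, B ^ n * c₂ ^ q, by positivity, by positivity, ?_⟩
  intro b _ hb w hw1 hw2 k hk1 hk2
  have hb0 : ∀ m, 0 ≤ b m := fun m => (by positivity : 0 ≤ c₂ * r ^ m).trans (hb m).1
  have hlam0 := lamCoef_nonneg hd hb0
  have hv : 1 ≤ ∑ i, k i :=
    (hk1 ⟨0, by omega⟩ hw1).trans (single_le_sum (fun i _ => Nat.zero_le (k i)) (mem_univ _))
  constructor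
  · exact le_muQ hB.le hc2.le (by positivity) hlam0
      (fun k α h => hle_lam b c₂ r k α hc2.le hr0.le (fun m => (hb m).1)
        (summable_lamTerm hd hr0.le hr1 hb0 (fun m => (hb m).2) k α) h)
      hw1 (hw2.trans (min_le_left _ _)) (hw2.trans (min_le_right _ _)) k hk2
  · have hq' : (1 : ℝ) ≤ q := by exact_mod_cast hq
    have hv' : (1 : ℝ) ≤ (∑ i, k i : ℕ) := by exact_mod_cast hv
    calc muQ d n b q k
        ≤ ((q : ℝ) + 1) ^ n * q ! * K ^ n * c₁ ^ q * ((∑ i, k i : ℕ) + 1 : ℝ) ^ q *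
            r ^ (∑ i, k i) :=
          muQ_le hK.le hc1.le hr0.le hlam0 (fun k α => hlam_le b c₁ hb0 (fun m => (hb m).2) k α) k
      _ ≤ (2 * q) ^ n * q ! * K ^ n * c₁ ^ q * (2 * (∑ i, k i : ℕ) : ℝ) ^ q * r ^ (∑ i, k i) := by
          gcongr <;> linarith
      _ = _ := by ring

/-- Fix `q ≥ 1` and `1 ≤ w ≤ min(q,n)`; let `k₁,…,kₙ` with `k_i ≥ 1`
for `i ≤ w` and `k_i = 0` for `i > w`. Under the geometric bounds on `b`, with
`v := k₁ + ⋯ + k_w`, there exist constants `C_{1,q}, C_{2,q} > 0` depending only on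
`q, n, d, r, c₁, c₂` such that `C_{2,q} (r/4)^v ≤ μ_{(k),q} ≤ C_{1,q} qⁿ q! v^q r^v`. -/
theorem stmt_6 (d n : ℕ) (hd : 2 ≤ d) (hn : 1 ≤ n) (q : ℕ) (hq : 1 ≤ q)
    (r c₁ c₂ : ℝ) (hr0 : 0 < r) (hr1 : r < 1) (hc2 : 0 < c₂) (hcc : c₂ ≤ c₁) :
    ∃ C₁ C₂ : ℝ, 0 < C₁ ∧ 0 < C₂ ∧
      ∀ b : ℕ → ℝ,
        (∀ x ∈ Set.Icc (-1 : ℝ) 1, Summable fun m : ℕ => b m * x ^ m) →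
        (∀ m : ℕ, c₂ * r ^ m ≤ b m ∧ b m ≤ c₁ * r ^ m) →
        ∀ w : ℕ, 1 ≤ w → w ≤ min q n →
          ∀ k : Fin n → ℕ,
            (∀ i : Fin n, (i : ℕ) < w → 1 ≤ k i) →
            (∀ i : Fin n, w ≤ (i : ℕ) → k i = 0) →
            C₂ * (r / 4) ^ (∑ i, k i) ≤ muQ d n b q k ∧
            muQ d n b q k ≤
              C₁ * (q : ℝ) ^ n * (q.factorial : ℝ) * ((∑ i, k i : ℕ) : ℝ) ^ q *
                r ^ (∑ i, k i) :=
  stmt_6_general d n hd q hq r c₁ c₂ hr0 hr1 hc2 hcc
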